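/- arXiv:1305.0838 — 2 statements merged into one kernel-verified Lean document; each statement's English description precedes it below -/
import Mathlib

section
/- Define R_z(G,o) = z·Z_{G−o}(z)/Z_G(z) for complex z. If Re(z) > 0 then z^{-1}·R_z(G,o) has strictly positive real part; in particular Z_G(z) ≠ 0 on the open right half-plane. -/
/-!
Splitting the matchings of `G` according to whether they cover `o`, and if so by which edge
`s(o, v)`, gives `Z_G = z Z_{G-o} + Σ_{v ∼ o} Z_{G-o-v}`, i.e.
`Z_{G-o} / Z_G = 1 / (z + Σ_{v ∼ o} Z_{G-o-v} / Z_{G-o})`. By induction on the vertex set, each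
ratio `Z_{G-o-v} / Z_{G-o}` has positive real part, so for `Re z > 0` the denominator has
positive real part, and hence so does its inverse.
-/

open Finset
open scoped Classical

/-- The set of matchings (dimeric configurations) of `G` using only vertices of `S`. -/
noncomputable def matchingsOn {V : Type*} (G : SimpleGraph V) (S : Finset V) :
    Finset (Finset (Sym2 V)) :=
  S.sym2.powerset.filter fun D =>
    (∀ e ∈ D, e ∈ G.edgeSet) ∧
      (D : Set (Sym2 V)).Pairwise fun e f => ∀ v, v ∈ e → v ∉ f

/-- Monomer-dimer partition function with complex activity `z`. -/
noncomputable def Zc {V : Type*} (G : SimpleGraph V) (S : Finset V) (z : ℂ) : ℂ :=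
  ∑ D ∈ matchingsOn G S, z ^ (S.card - 2 * D.card)

section

variable {V : Type*} {G : SimpleGraph V} {S : Finset V} {D D' : Finset (Sym2 V)}

lemma mem_matchingsOn :
    D ∈ matchingsOn G S ↔ (∀ e ∈ D, ∀ v ∈ e, v ∈ S) ∧ (∀ e ∈ D, e ∈ G.edgeSet) ∧
      (D : Set (Sym2 V)).Pairwise fun e f => ∀ v, v ∈ e → v ∉ f := by
  simp only [matchingsOn, mem_filter, mem_powerset, subset_iff, mem_sym2_iff]

lemma mem_matchingsOn_erase [DecidableEq V] {x : V} :
    D ∈ matchingsOn G (S.erase x) ↔ D ∈ matchingsOn G S ∧ ∀ e ∈ D, x ∉ e := by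
  simp only [mem_matchingsOn, mem_erase]
  constructor
  · rintro ⟨hS, hE, hP⟩
    exact ⟨⟨fun e he v hv => (hS e he v hv).2, hE, hP⟩, fun e he hx => (hS e he x hx).1 rfl⟩
  · rintro ⟨⟨hS, hE, hP⟩, hx⟩
    exact ⟨fun e he v hv => ⟨fun h => hx e he (h ▸ hv), hS e he v hv⟩, hE, hP⟩

lemma mem_matchingsOn_of_subset (hD : D ∈ matchingsOn G S) (h : D' ⊆ D) :
    D' ∈ matchingsOn G S := by
  rw [mem_matchingsOn] at hD ⊢
  exact ⟨fun e he => hD.1 e (h he), fun e he => hD.2.1 e (h he), hD.2.2.mono h⟩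

lemma two_mul_card_le_of_mem_matchingsOn (hD : D ∈ matchingsOn G S) : 2 * #D ≤ #S := by
  rw [mem_matchingsOn] at hD
  obtain ⟨hS, hE, hP⟩ := hD
  calc 2 * #D = #(D.biUnion Sym2.toFinset) := by
        rw [card_biUnion, mul_comm, ← smul_eq_mul, ← sum_const]
        · exact sum_congr rfl fun e he =>
            (Sym2.card_toFinset_of_not_isDiag e (G.not_isDiag_of_mem_edgeSet (hE e he))).symm
        · exact fun e he f hf hef => disjoint_left.2 fun v hve hvf =>
            hP he hf hef v (Sym2.mem_toFinset.1 hve) (Sym2.mem_toFinset.1 hvf)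
    _ ≤ #S := card_le_card <| biUnion_subset.2 fun e he v hv => hS e he v (Sym2.mem_toFinset.1 hv)

lemma insert_mem_matchingsOn [DecidableEq V] {a b : V}
    (hD : D ∈ matchingsOn G ((S.erase a).erase b)) (hab : G.Adj a b) (ha : a ∈ S) (hb : b ∈ S) :
    insert s(a, b) D ∈ matchingsOn G S := by
  obtain ⟨hD, hbD⟩ := mem_matchingsOn_erase.1 hD
  obtain ⟨hD, haD⟩ := mem_matchingsOn_erase.1 hD
  rw [mem_matchingsOn] at hD ⊢
  obtain ⟨hS, hE, hP⟩ := hD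
  refine ⟨?_, ?_, ?_⟩
  · simp only [mem_insert, forall_eq_or_imp, Sym2.mem_iff, forall_eq]
    exact ⟨⟨ha, hb⟩, hS⟩
  · simpa [hab] using hE
  · have hdisj : ∀ f ∈ D, ∀ v, v ∈ s(a, b) → v ∉ f := by
      simp only [Sym2.mem_iff, forall_eq_or_imp, forall_eq]
      exact fun f hf => ⟨haD f hf, hbD f hf⟩
    rw [coe_insert, Set.pairwise_insert]
    exact ⟨hP, fun f hf _ => ⟨hdisj f hf, fun v hvf hv => hdisj f hf v hv hvf⟩⟩

lemma erase_mem_matchingsOn [DecidableEq V] {a b : V} (hD : D ∈ matchingsOn G S)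
    (hab : s(a, b) ∈ D) :
    D.erase s(a, b) ∈ matchingsOn G ((S.erase a).erase b) := by
  have hdisj : ∀ f ∈ D.erase s(a, b), ∀ v, v ∈ s(a, b) → v ∉ f := fun f hf =>
    (mem_matchingsOn.1 hD).2.2 hab (mem_of_mem_erase hf) (ne_of_mem_erase hf).symm
  refine mem_matchingsOn_erase.2 ⟨mem_matchingsOn_erase.2 ⟨?_, ?_⟩, ?_⟩
  · exact mem_matchingsOn_of_subset hD (erase_subset _ _)
  · exact fun f hf => hdisj f hf a (Sym2.mem_mk_left a b)
  · exact fun f hf => hdisj f hf b (Sym2.mem_mk_right a b)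

lemma sum_filter_mem_matchingsOn [DecidableEq V] {a b : V} (hab : G.Adj a b) (ha : a ∈ S)
    (hb : b ∈ S) (z : ℂ) :
    ∑ D ∈ (matchingsOn G S).filter (s(a, b) ∈ ·), z ^ (#S - 2 * #D) =
      Zc G ((S.erase a).erase b) z := by
  have := card_erase_add_one ha
  have := card_erase_add_one (mem_erase.2 ⟨hab.ne.symm, hb⟩)
  refine sum_nbij' (·.erase s(a, b)) (insert s(a, b)) ?_ ?_ ?_ ?_ ?_
  · intro D hD
    obtain ⟨hD, hab⟩ := mem_filter.1 hD
    exact erase_mem_matchingsOn hD hab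
  · intro D hD
    exact mem_filter.2 ⟨insert_mem_matchingsOn hD hab ha hb, mem_insert_self _ _⟩
  · intro D hD
    exact insert_erase (mem_filter.1 hD).2
  · intro D hD
    refine erase_insert fun h => ?_
    exact (mem_matchingsOn_erase.1 (mem_matchingsOn_erase.1 hD).1).2 _ h (Sym2.mem_mk_left a b)
  · intro D hD
    rw [card_erase_of_mem (mem_filter.1 hD).2]
    have := card_pos.2 ⟨_, (mem_filter.1 hD).2⟩
    congr 1
    omega

lemma filter_exists_mem_matchingsOn_eq_biUnion [DecidableEq V] (o : V) :
    (matchingsOn G S).filter (fun D => ∃ e ∈ D, o ∈ e) =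
      ((S.erase o).filter (G.Adj o)).biUnion fun v => (matchingsOn G S).filter (s(o, v) ∈ ·) := by
  ext D
  simp only [mem_filter, mem_biUnion, mem_erase]
  constructor
  · rintro ⟨hD, e, he, hoe⟩
    obtain ⟨v, rfl⟩ : ∃ v, s(o, v) = e := ⟨_, Sym2.other_spec hoe⟩
    have hadj : G.Adj o v := (mem_matchingsOn.1 hD).2.1 _ he
    have hv : v ∈ S := (mem_matchingsOn.1 hD).1 _ he v (Sym2.mem_mk_right o v)
    exact ⟨v, ⟨⟨hadj.ne.symm, hv⟩, hadj⟩, hD, he⟩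
  · rintro ⟨v, -, hD, hv⟩
    exact ⟨hD, _, hv, Sym2.mem_mk_left o v⟩

lemma Zc_eq_mul_Zc_erase_add_sum [DecidableEq V] {o : V} (ho : o ∈ S) (z : ℂ) :
    Zc G S z = z * Zc G (S.erase o) z +
      ∑ v ∈ (S.erase o).filter (G.Adj o), Zc G ((S.erase o).erase v) z := by
  rw [Zc, ← sum_filter_not_add_sum_filter _ (fun D => ∃ e ∈ D, o ∈ e)]
  congr 1
  · have hfilter :
        (matchingsOn G S).filter (fun D => ¬∃ e ∈ D, o ∈ e) = matchingsOn G (S.erase o) := by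
      ext D
      simp [mem_matchingsOn_erase]
    rw [hfilter, Zc, mul_sum]
    refine sum_congr rfl fun D hD => ?_
    have := two_mul_card_le_of_mem_matchingsOn hD
    have := card_erase_add_one ho
    rw [← pow_succ']
    congr 1
    omega
  · rw [filter_exists_mem_matchingsOn_eq_biUnion, sum_biUnion]
    · exact sum_congr rfl fun v hv =>
        sum_filter_mem_matchingsOn (mem_filter.1 hv).2 ho (mem_of_mem_erase (mem_filter.1 hv).1) z
    · intro v _ w _ hvw
      refine disjoint_filter.2 fun D hD hv hw => ?_
      have hne : s(o, v) ≠ s(o, w) := fun h => hvw (Sym2.congr_right.1 h)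
      exact (mem_matchingsOn.1 hD).2.2 hv hw hne o (Sym2.mem_mk_left o v) (Sym2.mem_mk_left o w)

lemma Zc_empty (z : ℂ) : Zc G ∅ z = 1 := by
  have hempty : matchingsOn G (∅ : Finset V) = {∅} := by
    refine eq_singleton_iff_unique_mem.2 ⟨?_, fun D hD => ?_⟩
    · simp [mem_matchingsOn]
    · simpa using two_mul_card_le_of_mem_matchingsOn hD
  simp [Zc, hempty]

lemma Complex.inv_re_pos {w : ℂ} (hw : 0 < w.re) : 0 < w⁻¹.re := by
  have hw0 : w ≠ 0 := by rintro rfl; simp at hw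
  rw [Complex.inv_re]
  exact div_pos hw (Complex.normSq_pos.2 hw0)

lemma re_Zc_erase_div_Zc_pos [DecidableEq V] (G : SimpleGraph V) {z : ℂ} (hz : 0 < z.re)
    (S : Finset V) :
    ∀ o ∈ S, 0 < (Zc G (S.erase o) z / Zc G S z).re := by
  induction S using strongInduction with | H S ih =>
  intro o ho
  set T := S.erase o
  have ihT := ih T (erase_ssubset ho)
  have hT : Zc G T z ≠ 0 := by
    rcases T.eq_empty_or_nonempty with hT | ⟨v, hv⟩
    · simp [hT, Zc_empty]
    · intro h
      -- `x / 0 = 0` would make the ratio's real part vanish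
      simpa [h] using ihT v hv
  set w := z + ∑ v ∈ T.filter (G.Adj o), Zc G (T.erase v) z / Zc G T z
  have hw : 0 < w.re := by
    rw [Complex.add_re, Complex.re_sum]
    exact add_pos_of_pos_of_nonneg hz (sum_nonneg fun v hv => (ihT v (mem_filter.1 hv).1).le)
  have hS : Zc G S z = Zc G T z * w := by
    rw [Zc_eq_mul_Zc_erase_add_sum ho, mul_add, mul_sum]
    simp only [mul_div_cancel₀ _ hT]
    ring
  rw [hS, div_mul_cancel_left₀ hT]
  exact Complex.inv_re_pos hw

end

/-- for `Re z > 0`, `z⁻¹ · R_z(G,o)` has strictly positive real part,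
where `R_z(G,o) = z · Z_{G−o}(z)/Z_G(z)`; in particular `Z_G(z) ≠ 0`. -/
theorem stmt_3 {V : Type*} [Fintype V] [DecidableEq V] (G : SimpleGraph V) (o : V)
    (z : ℂ) (hz : 0 < z.re) :
    0 < (z⁻¹ * (z * Zc G (Finset.univ.erase o) z / Zc G Finset.univ z)).re ∧
      Zc G Finset.univ z ≠ 0 := by
  have hz0 : z ≠ 0 := by rintro rfl; simp at hz
  have hR := re_Zc_erase_div_Zc_pos G hz univ o (mem_univ o)
  rw [mul_div_assoc, inv_mul_cancel_left₀ hz0]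
  exact ⟨hR, fun h => by simp [h] at hR⟩
end

section
/- For any finite simple graph G, vertex o, and complex z with Re(z) > 0, the quantity R_z(G,o) = z·Z_{G−o}(z)/Z_G(z) satisfies |R_z(G,o)| ≤ |z|/Re(z). -/
open Finset
open scoped Classical

/-!
Splitting the matchings of `S` according to whether, and with which neighbour `b`, they cover a
vertex `a` gives `Z_S = z Z_{S-a} + ∑_{b ~ a} Z_{S-a-b}`. Dividing by `Z_{S-a}`, the ratio
`Z_S / Z_{S-a}` is `z` plus a sum of inverses of ratios of the same kind for the smaller set
`S - a`. Since `Re w > 0` implies `Re w⁻¹ > 0`, induction on `S` shows that all these ratios have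
real part at least `Re z`; in particular `|Z_S / Z_{S-o}| ≥ Re z`, and `R_z(G, o)` is `z` divided
by such a ratio.
-/

namespace SimpleGraph

variable {V : Type*} {G : SimpleGraph V} {S T : Finset V} {D : Finset (Sym2 V)} {e : Sym2 V}
  {a b : V} {z : ℂ}

lemma mem_matchingsOn : D ∈ matchingsOn G S ↔ (∀ e ∈ D, ∀ v ∈ e, v ∈ S) ∧
    (∀ e ∈ D, e ∈ G.edgeSet) ∧ (D : Set (Sym2 V)).Pairwise fun e f => ∀ v, v ∈ e → v ∉ f := by
  simp [matchingsOn, subset_iff, mem_sym2_iff]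

lemma two_mul_card_le_card_of_mem_matchingsOn (hD : D ∈ matchingsOn G S) : 2 * #D ≤ #S := by
  obtain ⟨hS, hG, hdisj⟩ := mem_matchingsOn.1 hD
  calc 2 * #D = ∑ e ∈ D, #e.toFinset := by
        rw [sum_congr rfl fun e he => Sym2.card_toFinset_of_not_isDiag e
          (G.not_isDiag_of_mem_edgeSet (hG e he)), sum_const, smul_eq_mul, mul_comm]
    _ = #(D.biUnion Sym2.toFinset) := by
        refine (card_biUnion fun e he f hf hef => ?_).symm
        exact Finset.disjoint_left.2 fun v hve hvf =>
          hdisj he hf hef v (Sym2.mem_toFinset.1 hve) (Sym2.mem_toFinset.1 hvf)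
    _ ≤ #S := card_le_card fun v hv => by
        obtain ⟨e, he, hve⟩ := mem_biUnion.1 hv
        exact hS e he v (Sym2.mem_toFinset.1 hve)

lemma matchingsOn_empty : matchingsOn G ∅ = {∅} := by
  simp [matchingsOn]


variable [DecidableEq V]

lemma filter_matchingsOn_eq_matchingsOn_erase :
    (matchingsOn G S).filter (fun D => ¬∃ e ∈ D, a ∈ e) = matchingsOn G (S.erase a) := by
  ext D
  simp only [mem_filter, mem_matchingsOn, mem_erase, not_exists, not_and]
  constructor
  · rintro ⟨⟨hS, hG, hdisj⟩, ha⟩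
    exact ⟨fun e he v hv => ⟨fun hva => ha e he (hva ▸ hv), hS e he v hv⟩, hG, hdisj⟩
  · rintro ⟨hS, hG, hdisj⟩
    exact ⟨⟨fun e he v hv => (hS e he v hv).2, hG, hdisj⟩, fun e he ha => (hS e he a ha).1 rfl⟩

lemma insert_mem_matchingsOn (hD : D ∈ matchingsOn G S) (he : e ∈ G.edgeSet)
    (heS : ∀ v ∈ e, v ∉ S) (heT : ∀ v ∈ e, v ∈ T) (hST : S ⊆ T) :
    insert e D ∈ matchingsOn G T := by
  obtain ⟨hS, hG, hdisj⟩ := mem_matchingsOn.1 hD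
  refine mem_matchingsOn.2 ⟨?_, ?_, ?_⟩
  · rintro f hf v hv
    rcases mem_insert.1 hf with rfl | hf
    exacts [heT v hv, hST (hS f hf v hv)]
  · rintro f hf
    rcases mem_insert.1 hf with rfl | hf
    exacts [he, hG f hf]
  · rw [coe_insert]
    refine hdisj.insert fun f hf _ => ⟨fun v hve hvf => heS v hve (hS f hf v hvf),
      fun v hvf hve => heS v hve (hS f hf v hvf)⟩

lemma erase_mem_matchingsOn (hD : D ∈ matchingsOn G S) (he : s(a, b) ∈ D) :
    D.erase s(a, b) ∈ matchingsOn G ((S.erase a).erase b) := by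
  obtain ⟨hS, hG, hdisj⟩ := mem_matchingsOn.1 hD
  refine mem_matchingsOn.2 ⟨fun f hf v hv => ?_, fun f hf => hG f (mem_of_mem_erase hf),
    hdisj.mono (coe_subset.2 (erase_subset _ _))⟩
  obtain ⟨hfe, hf⟩ := mem_erase.1 hf
  have hvab : ∀ w ∈ s(a, b), v ≠ w := fun w hw hvw =>
    hdisj he hf (Ne.symm hfe) w hw (hvw ▸ hv)
  exact mem_erase.2 ⟨hvab b (Sym2.mem_mk_right a b),
    mem_erase.2 ⟨hvab a (Sym2.mem_mk_left a b), hS f hf v hv⟩⟩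

lemma sum_filter_mem_matchingsOn {M : Type*} [AddCommMonoid M] (ha : a ∈ S) (hb : b ∈ S)
    (hab : G.Adj a b) (g : ℕ → M) :
    ∑ D ∈ (matchingsOn G S).filter (s(a, b) ∈ ·), g #D =
      ∑ D ∈ matchingsOn G ((S.erase a).erase b), g (#D + 1) := by
  have hnot : ∀ D ∈ matchingsOn G ((S.erase a).erase b), s(a, b) ∉ D := fun D hD he => by
    simpa using (mem_matchingsOn.1 hD).1 _ he a (Sym2.mem_mk_left a b)
  refine sum_nbij' (Finset.erase · s(a, b)) (insert s(a, b)) (fun D hD => ?_) (fun D hD => ?_)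
    (fun D hD => insert_erase (mem_filter.1 hD).2) (fun D hD => erase_insert (hnot D hD))
    (fun D hD => by rw [← card_erase_add_one (mem_filter.1 hD).2])
  · exact erase_mem_matchingsOn (mem_filter.1 hD).1 (mem_filter.1 hD).2
  · refine mem_filter.2 ⟨insert_mem_matchingsOn hD hab (by simp) ?_
      ((erase_subset _ _).trans (erase_subset _ _)), mem_insert_self _ _⟩
    intro v hv
    rcases Sym2.mem_iff.1 hv with rfl | rfl <;> assumption

lemma filter_matchingsOn_exists_mem_eq_biUnion :
    (matchingsOn G S).filter (fun D => ∃ e ∈ D, a ∈ e) =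
      ((S.erase a).filter (G.Adj a)).biUnion fun b => (matchingsOn G S).filter (s(a, b) ∈ ·) := by
  ext D
  simp only [mem_filter, mem_biUnion, mem_erase]
  constructor
  · rintro ⟨hD, e, he, hae⟩
    obtain ⟨hS, hG, -⟩ := mem_matchingsOn.1 hD
    have hea : s(a, Sym2.Mem.other hae) = e := Sym2.other_spec hae
    have hadj : G.Adj a (Sym2.Mem.other hae) := by rw [← mem_edgeSet, hea]; exact hG e he
    exact ⟨_, ⟨⟨hadj.ne', hS e he _ (Sym2.other_mem hae)⟩, hadj⟩, hD, hea.symm ▸ he⟩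
  · rintro ⟨b, -, hD, hab⟩
    exact ⟨hD, _, hab, Sym2.mem_mk_left a b⟩

lemma pairwiseDisjoint_filter_mem_matchingsOn (N : Finset V) :
    (N : Set V).PairwiseDisjoint fun b => (matchingsOn G S).filter (s(a, b) ∈ ·) := by
  intro b _ c _ hbc
  refine Finset.disjoint_left.2 fun D hb hc => ?_
  obtain ⟨hD, hb⟩ := mem_filter.1 hb
  have hne : s(a, b) ≠ s(a, c) := fun h => hbc (Sym2.congr_right.1 h)
  exact (mem_matchingsOn.1 hD).2.2 hb (mem_filter.1 hc).2 hne a (Sym2.mem_mk_left a b)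
    (Sym2.mem_mk_left a c)

lemma Zc_eq_mul_Zc_erase_add_sum (ha : a ∈ S) (z : ℂ) :
    Zc G S z = z * Zc G (S.erase a) z +
      ∑ b ∈ (S.erase a).filter (G.Adj a), Zc G ((S.erase a).erase b) z := by
  rw [Zc, ← sum_filter_not_add_sum_filter _ (fun D => ∃ e ∈ D, a ∈ e),
    filter_matchingsOn_eq_matchingsOn_erase, filter_matchingsOn_exists_mem_eq_biUnion,
    sum_biUnion (pairwiseDisjoint_filter_mem_matchingsOn _), Zc, mul_sum]
  have hcard := card_erase_add_one ha
  congr 1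
  · refine sum_congr rfl fun D hD => ?_
    have := two_mul_card_le_card_of_mem_matchingsOn hD
    rw [← pow_succ']
    congr 1
    omega
  · refine sum_congr rfl fun b hb => ?_
    obtain ⟨hbS, hab⟩ := mem_filter.1 hb
    rw [sum_filter_mem_matchingsOn ha (mem_of_mem_erase hbS) hab (fun k => z ^ (#S - 2 * k)), Zc]
    have hcard' := card_erase_add_one hbS
    refine sum_congr rfl fun D _ => ?_
    congr 1
    omega

lemma Zc_div_Zc_erase_eq (ha : a ∈ S) (h : Zc G (S.erase a) z ≠ 0) :
    Zc G S z / Zc G (S.erase a) z =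
      z + ∑ b ∈ (S.erase a).filter (G.Adj a),
        (Zc G (S.erase a) z / Zc G ((S.erase a).erase b) z)⁻¹ := by
  simp only [Zc_eq_mul_Zc_erase_add_sum ha, add_div, mul_div_cancel_right₀ _ h, sum_div, inv_div]

lemma Zc_ne_zero_and_re_le_re_div (hz : 0 < z.re) (S : Finset V) :
    Zc G S z ≠ 0 ∧ ∀ a ∈ S, z.re ≤ (Zc G S z / Zc G (S.erase a) z).re := by
  induction S using Finset.strongInduction with
  | _ S ih =>
  rcases S.eq_empty_or_nonempty with rfl | ⟨a₀, ha₀⟩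
  · simp [Zc, matchingsOn_empty]
  have hre : ∀ a ∈ S, z.re ≤ (Zc G S z / Zc G (S.erase a) z).re := by
    intro a ha
    obtain ⟨hne, hre_erase⟩ := ih _ (erase_ssubset ha)
    rw [Zc_div_Zc_erase_eq ha hne, Complex.add_re, Complex.re_sum, le_add_iff_nonneg_right]
    refine sum_nonneg fun b hb => ?_
    rw [Complex.inv_re]
    exact div_nonneg ((hz.trans_le (hre_erase b (mem_filter.1 hb).1)).le) (Complex.normSq_nonneg _)
  refine ⟨fun h => ?_, hre⟩
  have h₀ := hre a₀ ha₀
  rw [h, zero_div, Complex.zero_re] at h₀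
  exact hz.not_ge h₀

end SimpleGraph

lemma Complex.norm_div_le_norm_div_re {z w : ℂ} (hz : 0 < z.re) (hw : z.re ≤ w.re) :
    ‖z / w‖ ≤ ‖z‖ / z.re := by
  rw [norm_div]
  gcongr
  exact hw.trans (Complex.re_le_norm w)

/-- for `Re z > 0`, `|R_z(G,o)| ≤ |z|/Re z` where
`R_z(G,o) = z · Z_{G−o}(z)/Z_G(z)`. -/
theorem stmt_4 {V : Type*} [Fintype V] [DecidableEq V] (G : SimpleGraph V) (o : V)
    (z : ℂ) (hz : 0 < z.re) :
    ‖z * Zc G (Finset.univ.erase o) z / Zc G Finset.univ z‖ ≤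
      ‖z‖ / z.re := by
  rw [← div_div_eq_mul_div]
  exact Complex.norm_div_le_norm_div_re hz
    ((G.Zc_ne_zero_and_re_le_re_div hz univ).2 o (mem_univ o))
end
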